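/- Let $C \subseteq \mathbb{R}^d$ be compact with $\tau(C) > 0$, and let $u \in C$ be a right endpoint of some gap of $C$. Then for every $\eta > 0$ there exists $\delta > 0$ with $\delta\sqrt{d} < \eta$ such that $u + (\delta, \delta, \dots, \delta) \in C$. -/

import Mathlib

open Set
open scoped ENNReal Classical

noncomputable section

/-- `ℝ^d` with the Euclidean metric. -/
abbrev Euc (d : ℕ) := EuclideanSpace ℝ (Fin d)

/-- `G` is a gap of `C`: an (open) path-connected component of the complement of `C`. -/
def IsGap {d : ℕ} (C G : Set (Euc d)) : Prop :=
  ∃ x ∈ Cᶜ, G = {y | JoinedIn Cᶜ x y}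

/-- The bounded gaps of `C`. -/
def boundedGaps {d : ℕ} (C : Set (Euc d)) : Set (Set (Euc d)) :=
  {G | IsGap C G ∧ Bornology.IsBounded G}

/-- The union of all unbounded gaps of `C` (for `d = 1` this is the union of the two
unbounded intervals; for `d ≥ 2` it is the single unbounded component). -/
def unboundedGapsUnion {d : ℕ} (C : Set (Euc d)) : Set (Euc d) :=
  ⋃₀ {G | IsGap C G ∧ ¬ Bornology.IsBounded G}

/-- Distance between two sets, as an extended nonnegative real. -/
def setEDist {d : ℕ} (s t : Set (Euc d)) : ℝ≥0∞ :=
  ⨅ x ∈ s, EMetric.infEdist x t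

/-- The Falconer–Yavicoli thickness `τ(C)` of a set `C ⊆ ℝ^d`: the infimum, over all bounded
gaps `G`, of the distance from `G` to the union of all other gaps of diameter at least
`diam G` together with the unbounded gap, divided by `diam G`.  (For bounded gaps enumerated
with non-increasing diameters this agrees with the definition
`⨅ n, dist (Gₙ, G₁ ∪ ⋯ ∪ Gₙ₋₁ ∪ E) / diam Gₙ`.)  If `C` has no bounded gap, `τ(C)` is `∞`
when `C` has non-empty interior and `0` otherwise. -/
def thickness {d : ℕ} (C : Set (Euc d)) : ℝ≥0∞ :=
  if (boundedGaps C).Nonempty then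
    ⨅ G ∈ boundedGaps C,
      setEDist G
        ((⋃₀ {G' | G' ∈ boundedGaps C ∧ G' ≠ G ∧ EMetric.diam G ≤ EMetric.diam G'})
          ∪ unboundedGapsUnion C) / EMetric.diam G
  else if (interior C).Nonempty then ⊤ else 0

/-- The `ε`-thickness `τ_ε(C)`: infimum over bounded gaps `G` and boundary points `u` of `G`
of `dist (u, ⋃_{G' ∈ H_{ε,G}} G' ∪ E) / diam G`, where `H_{ε,G}` consists of the gaps
`G' ≠ G` with `(1-ε) diam G < diam G'`. -/
def epsThickness {d : ℕ} (ε : ℝ) (C : Set (Euc d)) : ℝ≥0∞ :=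
  ⨅ G ∈ boundedGaps C, ⨅ u ∈ frontier G,
    EMetric.infEdist u
      ((⋃₀ {G' | G' ∈ boundedGaps C ∧ G' ≠ G ∧
          ENNReal.ofReal (1 - ε) * EMetric.diam G < EMetric.diam G'})
        ∪ unboundedGapsUnion C) / EMetric.diam G

/-- The point of `ℝ^{2d}` whose first `d` coordinates are those of `y` and whose last `d`
coordinates are those of `z`. -/
def pairPoint {d : ℕ} (y z : Euc d) : Euc (2 * d) :=
  WithLp.toLp 2 (fun i => if h : (i : ℕ) < d then y ⟨(i : ℕ), h⟩
           else z ⟨(i : ℕ) - d, by have := i.isLt; omega⟩)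

/-- The product `C₁ × C₂ ⊆ ℝ^{2d}` of two subsets of `ℝ^d`. -/
def setProd {d : ℕ} (C₁ C₂ : Set (Euc d)) : Set (Euc (2 * d)) :=
  {p | ∃ y ∈ C₁, ∃ z ∈ C₂, p = pairPoint y z}

/-- The pinned distance set `Δ_x(A) = {|x - y| : y ∈ A}`. -/
def pinnedDist {m : ℕ} (x : Euc m) (A : Set (Euc m)) : Set ℝ :=
  (fun y => dist x y) '' A

/-- The index `i` of `{1, …, d}` viewed inside `{1, …, 2d}` (first block). -/
def lo {d : ℕ} (i : Fin d) : Fin (2 * d) := ⟨(i : ℕ), by have := i.isLt; omega⟩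

/-- The index `i + d` of `{1, …, 2d}` (second block). -/
def hi {d : ℕ} (i : Fin d) : Fin (2 * d) := ⟨(i : ℕ) + d, by have := i.isLt; omega⟩

/-- The map `g_{x,t} : ℝ^d → ℝ^d`, `g_{x,t}(y)_i = x_{i+d} + √(t²/d - (x_i - y_i)²)`. -/
def gMap {d : ℕ} (x : Euc (2 * d)) (t : ℝ) (y : Euc d) : Euc d :=
  WithLp.toLp 2 (fun i => x (hi i) + Real.sqrt (t ^ 2 / (d : ℝ) - (x (lo i) - y i) ^ 2))

/-- `u` is a right endpoint of the gap `H`: a boundary point of `H` such that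
`u + (ε, …, ε) ∉ H` for every `ε > 0`. -/
def IsRightEndpoint {d : ℕ} (H : Set (Euc d)) (u : Euc d) : Prop :=
  u ∈ frontier H ∧ ∀ ε > (0 : ℝ), (WithLp.toLp 2 (fun i => u i + ε) : Euc d) ∉ H

/-- A closed axis-parallel rectangle (box) in `ℝ^d`. -/
def IsClosedBox {d : ℕ} (R : Set (Euc d)) : Prop :=
  ∃ a b : Fin d → ℝ, R = {y : Euc d | ∀ i, y i ∈ Set.Icc (a i) (b i)}

/-! If `u + (δ, …, δ) ∉ C` for all small `δ > 0`, the short diagonal segment leaving `u` lies in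
one gap `G`, which differs from `H` because `u` is a right endpoint of `H`; both gaps have `u` in
their closure. If one of them is bounded, the smaller bounded one is at distance `0` from the
other, which enters its term in `τ(C)`, so `τ(C) = 0`. If both are unbounded and `d ≥ 2`, the
complement of a large ball is path-connected and misses `C`, so it lies in a single gap and
`G = H`. If both are unbounded and `d = 1`, they are the two half-lines at `u`, so `C = {u}`,
which has no bounded gap and empty interior, hence thickness `0`. -/

open Bornology Filter Topology

section OrderTopology

variable {α : Type*} [LinearOrder α] [TopologicalSpace α] [OrderTopology α] {I : Set α} {a : α}

lemma Set.OrdConnected.eq_Iio_of_subset_Iio (hI : I.OrdConnected) (hIa : I ⊆ Iio a)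
    (ha : a ∈ closure I) (hbdd : ¬ BddBelow I) : I = Iio a := by
  refine hIa.antisymm fun x hx => ?_
  obtain ⟨y, hyI, hyx⟩ := not_bddBelow_iff.1 hbdd x
  obtain ⟨z, hxz, hzI⟩ : (Ioi x ∩ I).Nonempty := mem_closure_iff.1 ha _ isOpen_Ioi hx
  exact hI.out hyI hzI ⟨hyx.le, hxz.le⟩

lemma Set.OrdConnected.eq_Iio_or_eq_Ioi (hI : I.OrdConnected) (haI : a ∉ I)
    (ha : a ∈ closure I) (hbdd : ¬ (BddBelow I ∧ BddAbove I)) : I = Iio a ∨ I = Ioi a := by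
  have hside : I ⊆ Iio a ∨ I ⊆ Ioi a := by
    by_contra! h
    obtain ⟨⟨y, hyI, hya⟩, x, hxI, hxa⟩ := h.imp not_subset.1 not_subset.1
    exact haI (hI.out hxI hyI ⟨not_lt.1 hxa, not_lt.1 hya⟩)
  rcases hside with h | h
  · exact .inl (hI.eq_Iio_of_subset_Iio h ha fun hb => hbdd ⟨hb, a, fun x hx => (h hx).le⟩)
  · exact .inr (hI.dual.eq_Iio_of_subset_Iio (a := OrderDual.toDual a) h ha
      fun hb => hbdd ⟨⟨a, fun x hx => (h hx).le⟩, hb⟩)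

end OrderTopology

lemma isPathConnected_setOf_lt_norm {E : Type*} [NormedAddCommGroup E] [NormedSpace ℝ E]
    (h : 1 < Module.rank ℝ E) {R : ℝ} (hR : 0 ≤ R) : IsPathConnected {z : E | R < ‖z‖} := by
  have : {z : E | R < ‖z‖} = (fun p : E × ℝ => p.2 • p.1) '' (Metric.sphere 0 1 ×ˢ Ioi R) := by
    ext z
    constructor
    · intro hz
      have hz0 : 0 < ‖z‖ := hR.trans_lt hz
      refine ⟨(‖z‖⁻¹ • z, ‖z‖), ⟨?_, hz⟩, ?_⟩
      · simp [norm_smul, hz0.ne']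
      · simp [smul_smul, hz0.ne']
    · rintro ⟨⟨v, t⟩, ⟨hv, ht⟩, rfl⟩
      simp only [mem_sphere_zero_iff_norm] at hv
      simp only [mem_ofPred_eq, norm_smul, hv, mul_one, Real.norm_eq_abs]
      exact ht.trans_le (le_abs_self t)
  rw [this]
  exact ((isPathConnected_sphere h 0 zero_le_one).prod
    ((convex_Ioi R).isPathConnected nonempty_Ioi)).image (by fun_prop)

section Gaps

variable {d : ℕ} {C G H : Set (Euc d)}

lemma IsGap.subset_compl (hG : IsGap C G) : G ⊆ Cᶜ := by
  obtain ⟨x, -, rfl⟩ := hG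
  exact pathComponentIn_subset

lemma IsGap.isPathConnected (hG : IsGap C G) : IsPathConnected G := by
  obtain ⟨x, hx, rfl⟩ := hG
  exact isPathConnected_pathComponentIn hx

lemma IsGap.eq_pathComponentIn (hG : IsGap C G) {x : Euc d} (hx : x ∈ G) :
    G = pathComponentIn Cᶜ x := by
  obtain ⟨y, -, rfl⟩ := hG
  exact (pathComponentIn_congr hx).symm

lemma IsGap.eq_of_mem (hG : IsGap C G) (hH : IsGap C H) {x : Euc d} (hxG : x ∈ G)
    (hxH : x ∈ H) : G = H :=
  (hG.eq_pathComponentIn hxG).trans (hH.eq_pathComponentIn hxH).symm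

lemma exists_isGap_superset {S : Set (Euc d)} (hS : IsPathConnected S) (hSC : S ⊆ Cᶜ) :
    ∃ G, IsGap C G ∧ S ⊆ G := by
  obtain ⟨x, hx⟩ := hS.nonempty
  exact ⟨pathComponentIn Cᶜ x, ⟨x, hSC hx, rfl⟩, hS.subset_pathComponentIn hx hSC⟩

lemma IsGap.eq_of_not_isBounded (hC : IsBounded C) (hd : 1 < d) (hG : IsGap C G)
    (hH : IsGap C H) (hGb : ¬ IsBounded G) (hHb : ¬ IsBounded H) : G = H := by
  obtain ⟨R, hCR⟩ := hC.subset_closedBall 0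
  set U := {z : Euc d | max R 0 < ‖z‖}
  have hUC : U ⊆ Cᶜ := fun z hz hzC =>
    ((mem_closedBall_zero_iff.1 (hCR hzC)).trans (le_max_left R 0)).not_gt hz
  have hmeet : ∀ S : Set (Euc d), ¬ IsBounded S → ∃ z ∈ S, z ∈ U := by
    intro S hS
    by_contra! h
    exact hS ((Metric.isBounded_closedBall (x := 0) (r := max R 0)).subset
      fun z hz => mem_closedBall_zero_iff.2 (not_lt.1 (h z hz)))
  obtain ⟨g, hgG, hgU⟩ := hmeet G hGb
  obtain ⟨h, hhH, hhU⟩ := hmeet H hHb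
  have hrank : 1 < Module.rank ℝ (Euc d) := by
    rw [← Module.finrank_eq_rank, finrank_euclideanSpace_fin]
    exact_mod_cast hd
  have hUG : U ⊆ G := hG.eq_pathComponentIn hgG ▸
    (isPathConnected_setOf_lt_norm hrank (le_max_right R 0)).subset_pathComponentIn hgU hUC
  exact hG.eq_of_mem hH (hUG hhU) hhH

def largerGapsUnion (C G : Set (Euc d)) : Set (Euc d) :=
  (⋃₀ {G' | G' ∈ boundedGaps C ∧ G' ≠ G ∧ Metric.ediam G ≤ Metric.ediam G'}) ∪
    unboundedGapsUnion C

lemma IsGap.subset_largerGapsUnion (hH : IsGap C H) (hHG : H ≠ G)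
    (hdiam : IsBounded H → Metric.ediam G ≤ Metric.ediam H) : H ⊆ largerGapsUnion C G := by
  intro x hx
  by_cases hHb : IsBounded H
  · exact .inl ⟨H, ⟨⟨hH, hHb⟩, hHG, hdiam hHb⟩, hx⟩
  · exact .inr ⟨H, ⟨hH, hHb⟩, hx⟩

lemma thickness_le (hG : G ∈ boundedGaps C) :
    thickness C ≤ setEDist G (largerGapsUnion C G) / Metric.ediam G := by
  rw [thickness, if_pos ⟨G, hG⟩]
  exact iInf₂_le G hG

lemma setEDist_eq_zero_of_mem_closure {s t : Set (Euc d)} {u : Euc d} (hs : u ∈ closure s)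
    (ht : u ∈ closure t) : setEDist s t = 0 := by
  refine le_antisymm ?_ zero_le
  calc setEDist s t ≤ ⨅ x ∈ s, edist u x := iInf₂_mono fun x _ => by
        have := Metric.infEDist_le_infEDist_add_edist (x := x) (y := u) (s := t)
        rwa [Metric.mem_closure_iff_infEDist_zero.1 ht, zero_add, edist_comm] at this
    _ = 0 := Metric.mem_closure_iff_infEDist_zero.1 hs

lemma thickness_eq_zero_of_mem_closure_of_ediam_le (hG : IsGap C G) (hGb : IsBounded G)
    (hH : IsGap C H) (hHG : H ≠ G) (hdiam : IsBounded H → Metric.ediam G ≤ Metric.ediam H)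
    {u : Euc d} (huG : u ∈ closure G) (huH : u ∈ closure H) : thickness C = 0 := by
  have hdist : setEDist G (largerGapsUnion C G) = 0 := setEDist_eq_zero_of_mem_closure huG
    (closure_mono (hH.subset_largerGapsUnion hHG hdiam) huH)
  simpa [hdist] using thickness_le ⟨hG, hGb⟩

lemma thickness_eq_zero_of_mem_closure (hG : IsGap C G) (hH : IsGap C H) (hGH : G ≠ H)
    (hb : IsBounded G ∨ IsBounded H) {u : Euc d} (huG : u ∈ closure G)
    (huH : u ∈ closure H) : thickness C = 0 := by
  rcases le_total (Metric.ediam G) (Metric.ediam H) with hle | hle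
  · by_cases hGb : IsBounded G
    · exact thickness_eq_zero_of_mem_closure_of_ediam_le hG hGb hH hGH.symm (fun _ => hle)
        huG huH
    · exact thickness_eq_zero_of_mem_closure_of_ediam_le hH (hb.resolve_left hGb) hG hGH
        (fun h => (hGb h).elim) huH huG
  · by_cases hHb : IsBounded H
    · exact thickness_eq_zero_of_mem_closure_of_ediam_le hH hHb hG hGH (fun _ => hle) huH huG
    · exact thickness_eq_zero_of_mem_closure_of_ediam_le hG (hb.resolve_right hHb) hH hGH.symm
        (fun h => (hHb h).elim) huG huH

end Gaps

section Line

variable {C G H : Set (Euc 1)} {u : Euc 1}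

lemma IsGap.coord_image_eq_Iio_or_eq_Ioi (hG : IsGap C G) (hu : u ∈ C)
    (huG : u ∈ closure G) (hGb : ¬ IsBounded G) :
    (· 0) '' G = Iio (u 0) ∨ (· 0) '' G = Ioi (u 0) := by
  let π := PiLp.equivOfUnique 2 ℝ (fun _ : Fin 1 => ℝ)
  change π '' G = Iio (π u) ∨ π '' G = Ioi (π u)
  refine Set.OrdConnected.eq_Iio_or_eq_Ioi ?_ ?_ ?_ ?_
  · exact (hG.isPathConnected.isConnected.isPreconnected.image _
      π.continuous.continuousOn).ordConnected
  · rw [π.injective.mem_set_image]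
    exact fun h => hG.subset_compl h hu
  · exact mem_closure_image π.continuous.continuousAt huG
  · rw [← isBounded_iff_bddBelow_bddAbove]
    exact fun h => hGb ((π.antilipschitz.isBounded_preimage h).subset (subset_preimage_image _ _))

lemma compl_singleton_subset_union_of_not_isBounded (hu : u ∈ C) (hG : IsGap C G)
    (hH : IsGap C H) (hGH : G ≠ H) (hGb : ¬ IsBounded G) (hHb : ¬ IsBounded H)
    (huG : u ∈ closure G) (huH : u ∈ closure H) : {u}ᶜ ⊆ G ∪ H := by
  intro x hx
  have hinj : Function.Injective (fun x : Euc 1 => x 0) :=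
    (PiLp.equivOfUnique 2 ℝ (fun _ : Fin 1 => ℝ)).injective
  have himage : (· 0) '' G ≠ (· 0) '' H := hinj.image_injective.ne hGH
  have hxu : x 0 < u 0 ∨ u 0 < x 0 := lt_or_gt_of_ne (hinj.ne hx)
  have hx0 : x 0 ∈ (· 0) '' G ∪ (· 0) '' H := by
    rcases hG.coord_image_eq_Iio_or_eq_Ioi hu huG hGb with hG' | hG' <;>
      rcases hH.coord_image_eq_Iio_or_eq_Ioi hu huH hHb with hH' | hH' <;>
      rw [hG', hH'] at himage ⊢
    · exact absurd rfl himage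
    · exact hxu
    · exact hxu.symm
    · exact absurd rfl himage
  rwa [← image_union, hinj.mem_set_image] at hx0

lemma thickness_eq_zero_of_not_isBounded_of_mem_closure (hu : u ∈ C) (hG : IsGap C G)
    (hH : IsGap C H) (hGH : G ≠ H) (hGb : ¬ IsBounded G) (hHb : ¬ IsBounded H)
    (huG : u ∈ closure G) (huH : u ∈ closure H) : thickness C = 0 := by
  have hcover := compl_singleton_subset_union_of_not_isBounded hu hG hH hGH hGb hHb huG huH
  have hCu : C ⊆ {u} := fun c hc => by_contra fun hcu =>
    (hcover hcu).elim (fun h => hG.subset_compl h hc) (fun h => hH.subset_compl h hc)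
  have hgaps : boundedGaps C = ∅ := by
    refine eq_empty_of_forall_notMem fun W ⟨hW, hWb⟩ => ?_
    obtain ⟨x, hx, rfl⟩ := id hW
    have hxW : x ∈ pathComponentIn Cᶜ x := mem_pathComponentIn_self hx
    rcases hcover (show x ≠ u from fun h => hx (h ▸ hu)) with hxG | hxH
    · exact hGb (hW.eq_of_mem hG hxW hxG ▸ hWb)
    · exact hHb (hW.eq_of_mem hH hxW hxH ▸ hWb)
  have hint : interior C = ∅ :=
    subset_empty_iff.1 ((interior_mono hCu).trans (interior_singleton u).subset)
  simp [thickness, hgaps, hint]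

end Line

section Diagonal

variable {d : ℕ}

def diagonalShift (u : Euc d) (δ : ℝ) : Euc d := WithLp.toLp 2 (fun i => u i + δ)

@[simp]
lemma diagonalShift_zero (u : Euc d) : diagonalShift u 0 = u := by
  ext
  simp [diagonalShift]

lemma continuous_diagonalShift (u : Euc d) : Continuous (diagonalShift u) := by
  unfold diagonalShift
  fun_prop

lemma mem_closure_diagonalShift_image (u : Euc d) {ε : ℝ} (hε : 0 < ε) :
    u ∈ closure (diagonalShift u '' Ioo 0 ε) := by
  have h0 : (0 : ℝ) ∈ closure (Ioo 0 ε) := by simp [closure_Ioo hε.ne, hε.le]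
  simpa using mem_closure_image (continuous_diagonalShift u).continuousAt h0

lemma IsRightEndpoint.frequently_diagonalShift_mem {C H : Set (Euc d)} {u : Euc d}
    (hC : IsCompact C) (hτ : 0 < thickness C) (hu : u ∈ C) (hH : IsGap C H)
    (hre : IsRightEndpoint H u) :
    ∃ᶠ δ in 𝓝[>] (0 : ℝ), diagonalShift u δ ∈ C := by
  by_contra hnot
  obtain ⟨ε, hε, hout⟩ := (nhdsGT_basis (0 : ℝ)).eventually_iff.1 (not_frequently.1 hnot)
  obtain ⟨G, hG, hDG⟩ := exists_isGap_superset (C := C)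
    (((convex_Ioo 0 ε).isPathConnected (nonempty_Ioo.2 hε)).image (continuous_diagonalShift u))
    (by rintro _ ⟨δ, hδ, rfl⟩; exact hout hδ)
  have huG : u ∈ closure G := closure_mono hDG (mem_closure_diagonalShift_image u hε)
  have huH : u ∈ closure H := frontier_subset_closure hre.1
  have hGH : G ≠ H := fun h => hre.2 (ε / 2) (half_pos hε)
    (h ▸ hDG ⟨ε / 2, ⟨half_pos hε, half_lt_self hε⟩, rfl⟩)
  by_cases hb : IsBounded G ∨ IsBounded H
  · exact hτ.ne' (thickness_eq_zero_of_mem_closure hG hH hGH hb huG huH)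
  obtain ⟨hGb, hHb⟩ := not_or.1 hb
  obtain rfl | rfl | hd : d = 0 ∨ d = 1 ∨ 1 < d := by omega
  · exact hGb (IsBounded.all G)
  · exact hτ.ne' (thickness_eq_zero_of_not_isBounded_of_mem_closure hu hG hH hGH hGb hHb huG huH)
  · exact hGH (hG.eq_of_not_isBounded hC.isBounded hd hH hGb hHb)

end Diagonal

/-- If `u ∈ C` is a right endpoint of some gap of a compact set `C` with `τ(C) > 0`, then
for every `η > 0` there is `δ > 0` with `δ √d < η` and `u + (δ, …, δ) ∈ C`. -/
theorem exists_diagonal_step_into_set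
    {d : ℕ} (C : Set (Euc d)) (hC : IsCompact C) (hτ : 0 < thickness C)
    (u : Euc d) (hu : u ∈ C)
    (H : Set (Euc d)) (hH : IsGap C H) (hre : IsRightEndpoint H u) :
    ∀ η > (0 : ℝ), ∃ δ > (0 : ℝ), δ * Real.sqrt d < η ∧
      (WithLp.toLp 2 (fun i => u i + δ) : Euc d) ∈ C := by
  intro η hη
  have hsmall : ∀ᶠ δ in 𝓝[>] (0 : ℝ), δ * Real.sqrt d < η := by
    have : Tendsto (fun δ : ℝ => δ * Real.sqrt d) (𝓝 0) (𝓝 0) := by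
      simpa using (continuous_mul_const (Real.sqrt d)).tendsto 0
    exact (this.mono_left nhdsWithin_le_nhds).eventually (gt_mem_nhds hη)
  obtain ⟨δ, hδC, hδη, hδ⟩ := ((hre.frequently_diagonalShift_mem hC hτ hu hH).and_eventually
    (hsmall.and self_mem_nhdsWithin)).exists
  exact ⟨δ, hδ, hδη, hδC⟩

end
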